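/- For every candidate set C ⊆ S, LB_2(C) ≤ LB_4(C). -/

import Mathlib

/-!
Formalization of guessing games (Wordle-style), following the paper's definitions:
guesses `G`, secrets `S ⊆ G`, responses `R` with `|R| > 1`, affirmative response
`r* ∈ R`, and an answering function `a` with `a(g,s) = r* ↔ g = s`.
-/

structure GuessingGame (α ρ : Type*) [DecidableEq α] [DecidableEq ρ] where
  G : Finset α
  S : Finset α
  R : Finset ρ
  rstar : ρ
  ans : α → α → ρ
  S_subset_G : S ⊆ G
  one_lt_card_R : 1 < R.card
  rstar_mem : rstar ∈ R
  ans_mem : ∀ g ∈ G, ∀ s ∈ S, ans g s ∈ R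
  ans_eq_rstar_iff : ∀ g ∈ G, ∀ s ∈ S, (ans g s = rstar ↔ g = s)

namespace GuessingGame

variable {α ρ : Type*} [DecidableEq α] [DecidableEq ρ] (gm : GuessingGame α ρ)

/-- The split `C_{g,r} = {c ∈ C : a(g,c) = r}`. -/
def split (C : Finset α) (g : α) (r : ρ) : Finset α :=
  C.filter fun c => gm.ans g c = r

/-- `nSplits(g,C) = |{r ∈ R : C_{g,r} ≠ ∅}|`. -/
def nSplits (g : α) (C : Finset α) : ℕ :=
  (gm.R.filter fun r => (gm.split C g r).Nonempty).card

/-- The useful guesses `UG(C)`: for `|C| > 1` the guesses `g ∈ G` with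
`nSplits(g,C) ≠ 1`; for `|C| ≤ 1`, `UG(C) = C`. -/
def UG (C : Finset α) : Finset α :=
  if 1 < C.card then gm.G.filter fun g => gm.nSplits g C ≠ 1 else C

/-- `MaxSplits(C) = max_{g ∈ G} nSplits(g,C)`. -/
def MaxSplits (C : Finset α) : ℕ :=
  gm.G.sup fun g => gm.nSplits g C

end GuessingGame

/-- `Bound(n,b)`: `Bound(0,b) = 0`, `Bound(n,1) = n(n+1)/2`, and for `n > 0`, `b > 1`,
`Bound(n,b) = Σ_{i=1}^{k} i·b^{i-1} + (k+1)·(n - (b^k - 1)/(b-1))` where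
`k = ⌊log_b (n(b-1)+1)⌋`. -/
def Bound (n b : ℕ) : ℕ :=
  if n = 0 then 0
  else if b = 1 then n * (n + 1) / 2
  else
    (∑ i ∈ Finset.range (Nat.log b (n * (b - 1) + 1)), (i + 1) * b ^ i) +
      (Nat.log b (n * (b - 1) + 1) + 1) *
        (n - (b ^ Nat.log b (n * (b - 1) + 1) - 1) / (b - 1))

namespace GuessingGame

variable {α ρ : Type*} [DecidableEq α] [DecidableEq ρ] (gm : GuessingGame α ρ)

/-- Fuel-based implementation of the well-founded recursion defining `MinTotal`:
`MinTotal(∅) = 0` and for nonempty `C`,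
`MinTotal(C) = min_{g ∈ UG(C)} (|C| + Σ_{r ∈ R \ {r*}} MinTotal(C_{g,r}))`.
Fuel `|C|` suffices since for a useful guess every split is a proper subset of `C`. -/
noncomputable def MinTotalAux : ℕ → Finset α → ℕ
  | 0, _ => 0
  | n + 1, C =>
    if C = ∅ then 0
    else
      sInf (↑((gm.UG C).image fun g =>
        C.card + ∑ r ∈ gm.R.erase gm.rstar, MinTotalAux n (gm.split C g r)) : Set ℕ)

/-- `MinTotal(C)`. -/
noncomputable def MinTotal (C : Finset α) : ℕ :=
  gm.MinTotalAux C.card C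

/-- `V*(g,C) = |C| + Σ_{r ∈ R \ {r*}} MinTotal(C_{g,r})`. -/
noncomputable def Vstar (g : α) (C : Finset α) : ℕ :=
  C.card + ∑ r ∈ gm.R.erase gm.rstar, gm.MinTotal (gm.split C g r)

/-- The lower bounds `LB_i` (`i ≥ 1`; `LB 0` is junk):
`LB_1(C) = Bound(|C|, MaxSplits(S))`, `LB_2(C) = Bound(|C|, MaxSplits(C))`, and for
`i ≥ 1`, `LB_{i+2}(∅) = 0` and `LB_{i+2}(C) = min_{g ∈ UG(C)} V_i(g,C)` for nonempty `C`,
where `V_i(g,C) = |C| + Σ_{r ∈ R \ {r*}} LB_i(C_{g,r})`. -/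
noncomputable def LB : ℕ → Finset α → ℕ
  | 0, _ => 0
  | 1, C => Bound C.card (gm.MaxSplits gm.S)
  | 2, C => Bound C.card (gm.MaxSplits C)
  | n + 3, C =>
    if C = ∅ then 0
    else
      sInf (↑((gm.UG C).image fun g =>
        C.card + ∑ r ∈ gm.R.erase gm.rstar, LB (n + 1) (gm.split C g r)) : Set ℕ)

/-- `V_i(g,C) = |C| + Σ_{r ∈ R \ {r*}} LB_i(C_{g,r})`. -/
noncomputable def V (i : ℕ) (g : α) (C : Finset α) : ℕ :=
  C.card + ∑ r ∈ gm.R.erase gm.rstar, gm.LB i (gm.split C g r)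

end GuessingGame

/-!
In a tree of branching at most `b`, at most `treeSize b i = 1 + b + ⋯ + b^(i-1)` nodes have
depth `≤ i` (the root has depth `1`), so the total depth of `n` nodes is at least
`boundSum n b = ∑ᵢ (n - treeSize b i)`, and `Bound n b` is the closed form of this sum. Hanging
subtrees of sizes `nⱼ` below a root, at most `b` of them nonempty and together of size at least
`n - 1`, gives `boundSum n b ≤ n + ∑ⱼ boundSum nⱼ b`. A guess `g ∈ G` splits `C` into at most
`MaxSplits C` nonempty classes, which cover `C` except possibly `g` itself once `r*` is left
out; as `boundSum` is antitone in `b` and `MaxSplits` is monotone in the candidate set, this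
gives `LB₂(C) ≤ V₂(g, C)` for every guess, in particular for the one attaining `LB₄(C)`.
-/

open Finset

def treeSize (b i : ℕ) : ℕ := ∑ j ∈ range i, b ^ j

def boundSum (n b : ℕ) : ℕ := ∑ i ∈ range n, (n - treeSize b i)

lemma treeSize_succ (b i : ℕ) : treeSize b (i + 1) = treeSize b i + b ^ i :=
  sum_range_succ _ _

lemma treeSize_succ' (b i : ℕ) : treeSize b (i + 1) = b * treeSize b i + 1 := by
  simp only [treeSize, sum_range_succ', mul_sum, pow_succ', pow_zero]

lemma le_treeSize {b : ℕ} (hb : 1 ≤ b) (i : ℕ) : i ≤ treeSize b i :=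
  calc i = ∑ _j ∈ range i, 1 := by simp
    _ ≤ treeSize b i := sum_le_sum fun j _ => Nat.one_le_pow j b hb

lemma treeSize_mono_left {b b' : ℕ} (h : b ≤ b') (i : ℕ) : treeSize b i ≤ treeSize b' i :=
  sum_le_sum fun j _ => Nat.pow_le_pow_left h j

lemma treeSize_mono_right (b : ℕ) {i i' : ℕ} (h : i ≤ i') : treeSize b i ≤ treeSize b i' :=
  sum_le_sum_of_subset (range_subset_range.2 h)

lemma treeSize_le_iff_le_log {b : ℕ} (hb : 1 < b) (i n : ℕ) :
    treeSize b i ≤ n ↔ i ≤ Nat.log b (n * (b - 1) + 1) := by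
  obtain ⟨x, rfl⟩ : ∃ x, b = x + 1 := ⟨b - 1, by omega⟩
  rw [Nat.le_log_iff_pow_le hb (by omega), ← geom_sum_mul_add, add_tsub_cancel_right,
    add_le_add_iff_right, Nat.mul_le_mul_right_iff (by omega)]
  rfl

lemma boundSum_anti {b b' : ℕ} (h : b ≤ b') (n : ℕ) : boundSum n b' ≤ boundSum n b :=
  sum_le_sum fun i _ => Nat.sub_le_sub_left (treeSize_mono_left h i) n

lemma boundSum_succ (n b : ℕ) :
    boundSum (n + 1) b = n + 1 + ∑ i ∈ range n, (n - b * treeSize b i) := by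
  simp only [boundSum, sum_range_succ', treeSize_succ', Nat.add_sub_add_right, add_comm]
  simp [treeSize]

lemma boundSum_one_mul_two (n : ℕ) : boundSum n 1 * 2 = n * (n + 1) := by
  induction n with
  | zero => simp [boundSum]
  | succ n ih =>
    have hsum : ∑ i ∈ range n, (n - 1 * treeSize 1 i) = boundSum n 1 := by
      simp only [one_mul, boundSum]
    rw [boundSum_succ, hsum, add_mul, ih]
    ring

lemma sum_range_tsub_treeSize {b k n : ℕ} (hk : treeSize b k ≤ n) :
    ∑ i ∈ range (k + 1), (n - treeSize b i) =
      ∑ i ∈ range k, (i + 1) * b ^ i + (k + 1) * (n - treeSize b k) := by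
  induction k with
  | zero => simp [treeSize]
  | succ k ih =>
    have hk' : treeSize b k ≤ n := (treeSize_mono_right b k.le_succ).trans hk
    rw [sum_range_succ, ih hk', sum_range_succ]
    have h := treeSize_succ b k
    have hsplit : n - treeSize b k = (n - treeSize b (k + 1)) + b ^ k := by omega
    rw [hsplit]
    ring

theorem bound_eq_boundSum {b : ℕ} (hb : 1 ≤ b) (n : ℕ) : Bound n b = boundSum n b := by
  rcases Nat.eq_zero_or_pos n with rfl | hn
  · simp [Bound, boundSum]
  rcases hb.eq_or_lt with rfl | hb2
  · rw [Bound, if_neg hn.ne', if_pos rfl, ← boundSum_one_mul_two, Nat.mul_div_cancel _ two_pos]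
  set k := Nat.log b (n * (b - 1) + 1)
  have hk : treeSize b k ≤ n := (treeSize_le_iff_le_log hb2 k n).2 le_rfl
  have hvanish_n : ∀ i ≥ n, n - treeSize b i = 0 := fun i hi => by
    have := le_treeSize hb i
    omega
  have hvanish_k : ∀ i ≥ k + 1, n - treeSize b i = 0 := fun i hi =>
    Nat.sub_eq_zero_of_le (not_le.1 (mt (treeSize_le_iff_le_log hb2 i n).1 (by omega))).le
  have hsum : boundSum n b = ∑ i ∈ range (k + 1), (n - treeSize b i) := by
    rcases le_total n (k + 1) with h | h
    · exact (eventually_constant_sum hvanish_n h).symm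
    · exact eventually_constant_sum hvanish_k h
  rw [Bound, if_neg hn.ne', if_neg hb2.ne', hsum, sum_range_tsub_treeSize hk, ← Nat.geomSum_eq hb2]
  rfl

lemma tsub_mul_le_sum_tsub {ι : Type*} {I : Finset ι} {f : ι → ℕ} {b m : ℕ}
    (hcard : #{t ∈ I | f t ≠ 0} ≤ b) (hsum : m ≤ ∑ t ∈ I, f t) (c : ℕ) :
    m - b * c ≤ ∑ t ∈ I, (f t - c) := by
  classical
  rw [Nat.sub_le_iff_le_add']
  calc m ≤ ∑ t ∈ I with f t ≠ 0, f t := by rwa [sum_filter_ne_zero]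
    _ ≤ ∑ t ∈ I with f t ≠ 0, (c + (f t - c)) := sum_le_sum fun _ _ => le_add_tsub
    _ = #{t ∈ I | f t ≠ 0} * c + ∑ t ∈ I with f t ≠ 0, (f t - c) := by
      rw [sum_add_distrib, sum_const, smul_eq_mul]
    _ ≤ b * c + ∑ t ∈ I, (f t - c) :=
      add_le_add (Nat.mul_le_mul_right c hcard) (sum_le_sum_of_subset (filter_subset _ _))

lemma sum_range_tsub_treeSize_le_boundSum {b : ℕ} (hb : 1 ≤ b) (m n : ℕ) :
    ∑ i ∈ range m, (n - treeSize b i) ≤ boundSum n b :=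
  sum_le_sum_of_ne_zero fun i _ hi => mem_range.2 <| by
    have := le_treeSize hb i
    omega

theorem boundSum_le_add_sum {ι : Type*} {I : Finset ι} {f : ι → ℕ} {n b : ℕ} (hb : 1 ≤ b)
    (hcard : #{t ∈ I | f t ≠ 0} ≤ b) (hsum : n - 1 ≤ ∑ t ∈ I, f t) :
    boundSum n b ≤ n + ∑ t ∈ I, boundSum (f t) b := by
  obtain _ | m := n
  · simp [boundSum]
  rw [boundSum_succ, add_le_add_iff_left]
  calc ∑ i ∈ range m, (m - b * treeSize b i)
      ≤ ∑ i ∈ range m, ∑ t ∈ I, (f t - treeSize b i) :=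
        sum_le_sum fun i _ => tsub_mul_le_sum_tsub hcard hsum _
    _ = ∑ t ∈ I, ∑ i ∈ range m, (f t - treeSize b i) := sum_comm
    _ ≤ ∑ t ∈ I, boundSum (f t) b :=
        sum_le_sum fun t _ => sum_range_tsub_treeSize_le_boundSum hb m (f t)

namespace GuessingGame

variable {α ρ : Type*} [DecidableEq α] [DecidableEq ρ] (gm : GuessingGame α ρ) {C D : Finset α}

lemma split_subset (g : α) (r : ρ) : gm.split C g r ⊆ C :=
  filter_subset _ _

lemma mem_split_self (hCS : C ⊆ gm.S) {c : α} (hc : c ∈ C) : c ∈ gm.split C c gm.rstar :=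
  mem_filter.2 ⟨hc, (gm.ans_eq_rstar_iff c (gm.S_subset_G (hCS hc)) c (hCS hc)).2 rfl⟩

lemma one_le_nSplits (hCS : C ⊆ gm.S) {c : α} (hc : c ∈ C) : 1 ≤ gm.nSplits c C :=
  card_pos.2 ⟨gm.rstar, mem_filter.2 ⟨gm.rstar_mem, c, gm.mem_split_self hCS hc⟩⟩

lemma one_lt_nSplits (hCS : C ⊆ gm.S) {c c' : α} (hc : c ∈ C) (hc' : c' ∈ C) (hne : c' ≠ c) :
    1 < gm.nSplits c C := by
  have hcG : c ∈ gm.G := gm.S_subset_G (hCS hc)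
  refine one_lt_card.2 ⟨gm.rstar, ?_, gm.ans c c', ?_, fun h => hne ?_⟩
  · exact mem_filter.2 ⟨gm.rstar_mem, c, gm.mem_split_self hCS hc⟩
  · exact mem_filter.2 ⟨gm.ans_mem c hcG c' (hCS hc'), c', mem_filter.2 ⟨hc', rfl⟩⟩
  · exact ((gm.ans_eq_rstar_iff c hcG c' (hCS hc')).1 h.symm).symm

lemma one_le_MaxSplits (hCS : C ⊆ gm.S) (hne : C.Nonempty) : 1 ≤ gm.MaxSplits C := by
  obtain ⟨c, hc⟩ := hne
  exact (gm.one_le_nSplits hCS hc).trans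
    (le_sup (f := fun g => gm.nSplits g C) (gm.S_subset_G (hCS hc)))

lemma nSplits_mono (h : D ⊆ C) (g : α) : gm.nSplits g D ≤ gm.nSplits g C :=
  card_le_card <| monotone_filter_right _ fun _ _ ⟨c, hc⟩ =>
    ⟨c, mem_filter.2 ⟨h (mem_filter.1 hc).1, (mem_filter.1 hc).2⟩⟩

lemma MaxSplits_mono (h : D ⊆ C) : gm.MaxSplits D ≤ gm.MaxSplits C :=
  sup_mono_fun fun g _ => gm.nSplits_mono h g

lemma UG_subset_G (hCS : C ⊆ gm.S) : gm.UG C ⊆ gm.G := by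
  unfold UG
  split_ifs
  · exact filter_subset _ _
  · exact hCS.trans gm.S_subset_G

lemma UG_nonempty (hCS : C ⊆ gm.S) (hne : C.Nonempty) : (gm.UG C).Nonempty := by
  unfold UG
  split_ifs with hcard
  · obtain ⟨c, hc⟩ := hne
    obtain ⟨c', hc', hne'⟩ := exists_mem_ne hcard c
    exact ⟨c, mem_filter.2 ⟨gm.S_subset_G (hCS hc), (gm.one_lt_nSplits hCS hc hc' hne').ne'⟩⟩
  · exact hne

lemma card_sub_one_le_sum_card_split (hCS : C ⊆ gm.S) {g : α} (hg : g ∈ gm.G) :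
    #C - 1 ≤ ∑ r ∈ gm.R.erase gm.rstar, #(gm.split C g r) := by
  have hcard : #C = ∑ r ∈ gm.R, #(gm.split C g r) :=
    card_eq_sum_card_fiberwise fun c hc => gm.ans_mem g hg c (hCS hc)
  have hrstar : #(gm.split C g gm.rstar) ≤ 1 :=
    card_le_one.2 fun c hc c' hc' => by
      simp only [split, mem_filter] at hc hc'
      rw [← (gm.ans_eq_rstar_iff g hg c (hCS hc.1)).1 hc.2,
        ← (gm.ans_eq_rstar_iff g hg c' (hCS hc'.1)).1 hc'.2]
  rw [← add_sum_erase _ _ gm.rstar_mem] at hcard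
  omega

lemma card_nonempty_splits_le_MaxSplits {g : α} (hg : g ∈ gm.G) :
    #{r ∈ gm.R.erase gm.rstar | #(gm.split C g r) ≠ 0} ≤ gm.MaxSplits C :=
  (card_le_card fun r hr => by
    simp only [mem_filter, card_ne_zero] at hr
    exact mem_filter.2 ⟨mem_of_mem_erase hr.1, hr.2⟩).trans
    (le_sup (f := fun g' => gm.nSplits g' C) hg)

lemma boundSum_le_LB_two (hCS : C ⊆ gm.S) (hDC : D ⊆ C) :
    boundSum #D (gm.MaxSplits C) ≤ gm.LB 2 D := by
  obtain rfl | hne := D.eq_empty_or_nonempty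
  · simp [boundSum]
  have hb := gm.one_le_MaxSplits (hDC.trans hCS) hne
  rw [LB, bound_eq_boundSum hb]
  exact boundSum_anti (gm.MaxSplits_mono hDC) _

lemma LB_two_le_V_two (hCS : C ⊆ gm.S) (hne : C.Nonempty) {g : α} (hg : g ∈ gm.G) :
    gm.LB 2 C ≤ gm.V 2 g C := by
  have hb := gm.one_le_MaxSplits hCS hne
  calc gm.LB 2 C = boundSum #C (gm.MaxSplits C) := bound_eq_boundSum hb _
    _ ≤ #C + ∑ r ∈ gm.R.erase gm.rstar, boundSum #(gm.split C g r) (gm.MaxSplits C) :=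
      boundSum_le_add_sum hb (gm.card_nonempty_splits_le_MaxSplits hg)
        (gm.card_sub_one_le_sum_card_split hCS hg)
    _ ≤ gm.V 2 g C := add_le_add_right (sum_le_sum fun r _ =>
      gm.boundSum_le_LB_two hCS (gm.split_subset g r)) _

lemma exists_mem_UG_LB_four_eq_V_two (hCS : C ⊆ gm.S) (hne : C.Nonempty) :
    ∃ g ∈ gm.UG C, gm.LB 4 C = gm.V 2 g C := by
  obtain ⟨g, hg⟩ := gm.UG_nonempty hCS hne
  have hmem := Nat.sInf_mem (s := ↑((gm.UG C).image fun g => gm.V 2 g C))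
    ⟨_, mem_coe.2 (mem_image_of_mem _ hg)⟩
  obtain ⟨g', hg', hV⟩ := mem_image.1 (mem_coe.1 hmem)
  refine ⟨g', hg', ?_⟩
  rw [hV]
  exact if_neg hne.ne_empty

end GuessingGame

section Statements

open GuessingGame

variable {α ρ : Type*} [DecidableEq α] [DecidableEq ρ]

theorem statement_14 (gm : GuessingGame α ρ) (C : Finset α) (hCS : C ⊆ gm.S) :
    gm.LB 2 C ≤ gm.LB 4 C := by
  obtain rfl | hne := C.eq_empty_or_nonempty
  · simp [LB, Bound]
  obtain ⟨g, hg, hLB⟩ := gm.exists_mem_UG_LB_four_eq_V_two hCS hne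
  exact hLB ▸ gm.LB_two_le_V_two hCS hne (gm.UG_subset_G hCS hg)

end Statements
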